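/- For every positive integer n, there exists a red-blue coloring of the triples of {1,…,r(3;n)−1} that contains no red monotone path on n+2 vertices and no blue copy of the fourth power path P^4_{3n}. Consequently r(3;n) ≤ R(P_{n+2}, P^4_{3n}). -/
import Mathlib


/-!
Common definitions.

A red-blue coloring of the triples of `{1,…,N}` is modelled as a function
`c : ℕ → ℕ → ℕ → Bool`, where `c u v w = true` means the triple `(u,v,w)`
(with `u < v < w`) is colored red, and `false` means blue.

An `n`-coloring of the pairs of `{1,…,N}` is a function `χ : ℕ → ℕ → Fin n`
(only its values on pairs `u < v` in `{1,…,N}` matter).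
-/

/-- `p` (restricted to indices `1,…,k`) is a red monotone path on `k` vertices
inside `{1,…,N}` under the red-blue triple coloring `c`. -/
def IsRedPath (N k : ℕ) (c : ℕ → ℕ → ℕ → Bool) (p : ℕ → ℕ) : Prop :=
  (∀ i, 1 ≤ i → i ≤ k → 1 ≤ p i ∧ p i ≤ N) ∧
  (∀ i j, 1 ≤ i → i < j → j ≤ k → p i < p j) ∧
  (∀ i, 1 ≤ i → i + 2 ≤ k → c (p i) (p (i + 1)) (p (i + 2)) = true)

/-- There is a red monotone path on `k` vertices inside `{1,…,N}`. -/
def HasRedPath (N k : ℕ) (c : ℕ → ℕ → ℕ → Bool) : Prop :=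
  ∃ p : ℕ → ℕ, IsRedPath N k c p

/-- `f` (restricted to indices `1,…,m`) is a blue copy, inside `{1,…,N}` under the
red-blue triple coloring `c`, of the ordered 3-uniform hypergraph on `{1,…,m}`
with edge relation `E`. -/
def IsBlueCopy (N m : ℕ) (E : ℕ → ℕ → ℕ → Prop) (c : ℕ → ℕ → ℕ → Bool) (f : ℕ → ℕ) : Prop :=
  (∀ i, 1 ≤ i → i ≤ m → 1 ≤ f i ∧ f i ≤ N) ∧
  (∀ i j, 1 ≤ i → i < j → j ≤ m → f i < f j) ∧
  (∀ a b d, E a b d → c (f a) (f b) (f d) = false)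

/-- The pair coloring `χ` has a monochromatic triangle inside `{1,…,N}`. -/
def HasMonoTriangle (N n : ℕ) (χ : ℕ → ℕ → Fin n) : Prop :=
  ∃ u v w, 1 ≤ u ∧ u < v ∧ v < w ∧ w ≤ N ∧ χ u v = χ v w ∧ χ u v = χ u w

/-- The pair coloring `χ` has a monochromatic complete subgraph on `m` vertices
inside `{1,…,N}`. -/
def HasMonoClique (N m n : ℕ) (χ : ℕ → ℕ → Fin n) : Prop :=
  ∃ S : Finset ℕ, S ⊆ Finset.Icc 1 N ∧ S.card = m ∧
    ∃ k : Fin n, ∀ u ∈ S, ∀ v ∈ S, u < v → χ u v = k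

/-- The multicolor Ramsey number `r(m;n)`: the least `N` such that every `n`-coloring
of the pairs of `{1,…,N}` contains a monochromatic complete subgraph on `m` vertices. -/
noncomputable def multicolorRamsey (m n : ℕ) : ℕ :=
  sInf {N | ∀ χ : ℕ → ℕ → Fin n, HasMonoClique N m n χ}

/-- The multicolor Ramsey number `r(3;n)` for triangles: the least `N` such that every
`n`-coloring of the pairs of `{1,…,N}` contains a monochromatic triangle. -/
noncomputable def r3 (n : ℕ) : ℕ :=
  sInf {N | ∀ χ : ℕ → ℕ → Fin n, HasMonoTriangle N n χ}

/-- A member of the family `𝒥ₙ`: a monotone path with `n` jumps. It is an ordered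
3-uniform hypergraph on vertex set `{1,…,m}` with edge relation `E` (written on
increasing triples), containing all consecutive triples, together with a jump set
`J ⊆ {2,…,m-1}` of size `n` with no two consecutive elements, satisfying
conditions (1) and (2). -/
structure JumpPath (n : ℕ) where
  /-- number of vertices -/
  m : ℕ
  /-- edge relation, on increasing triples of `{1,…,m}` -/
  E : ℕ → ℕ → ℕ → Prop
  /-- the jump set -/
  J : Finset ℕ
  three_le : 3 ≤ m
  edges_ordered : ∀ a b d, E a b d → 1 ≤ a ∧ a < b ∧ b < d ∧ d ≤ m
  consec : ∀ i, 1 ≤ i → i + 2 ≤ m → E i (i + 1) (i + 2)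
  jumps_subset : J ⊆ Finset.Icc 2 (m - 1)
  jumps_card : J.card = n
  jumps_nonconsec : ∀ v ∈ J, v + 1 ∉ J
  cond1a : ∀ v ∈ J, 3 ≤ v → E (v - 2) (v - 1) (v + 1)
  cond1b : ∀ v ∈ J, v + 2 ≤ m → E (v - 1) (v + 1) (v + 2)
  cond2 : ∀ v, v - 1 ∈ J → v + 1 ∈ J → E (v - 2) v (v + 2)

/-- The edge relation of the hypergraph `Iₙ` on vertex set `{1,…,2n+1}`. -/
def edgeI (n : ℕ) (a b d : ℕ) : Prop :=
  (1 ≤ a ∧ b = a + 1 ∧ d = a + 2 ∧ d ≤ 2 * n + 1) ∨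
  (∃ i, 1 ≤ i ∧ a = 2 * i - 1 ∧ b = 2 * i + 1 ∧ d = 2 * i + 2 ∧ d ≤ 2 * n + 1) ∨
  (∃ i, 1 ≤ i ∧ a = 2 * i ∧ b = 2 * i + 1 ∧ d = 2 * i + 3 ∧ d ≤ 2 * n + 1) ∨
  (∃ i, 1 ≤ i ∧ a = 2 * i - 1 ∧ b = 2 * i + 1 ∧ d = 2 * i + 3 ∧ d ≤ 2 * n + 1)

/-- The edge relation of the `t`-th power path `Pᵗₘ` on vertex set `{1,…,m}`:
all increasing triples spanning at most `t` consecutive vertices. -/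
def edgePow (t m : ℕ) (a b d : ℕ) : Prop :=
  1 ≤ a ∧ a < b ∧ b < d ∧ d ≤ m ∧ d - a ≤ t - 1

/-- The edge relation of the ordered graph `G_H` associated with a monotone path with
jumps on `{1,…,m}` with jump set `J`: all consecutive pairs `(i, i+1)` together with
the pairs `(v-1, v+1)` for `v ∈ J`. -/
def GEdge (m : ℕ) (J : Finset ℕ) (a b : ℕ) : Prop :=
  (1 ≤ a ∧ b = a + 1 ∧ b ≤ m) ∨ (∃ v ∈ J, a = v - 1 ∧ b = v + 1)

/-- `alphaFn N c u v` is `1` plus the number of edges of the longest red monotone path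
inside `{1,…,N}` ending with the pair `(u, v)` (a path on `k` vertices has `k - 2`
edges, so this equals the largest `k - 1` over such paths; a pair `u < v` in
`{1,…,N}` is itself a path on two vertices with `0` edges). -/
noncomputable def alphaFn (N : ℕ) (c : ℕ → ℕ → ℕ → Bool) (u v : ℕ) : ℕ :=
  sSup {e : ℕ | ∃ k p, IsRedPath N k c p ∧ 2 ≤ k ∧ p (k - 1) = u ∧ p k = v ∧ e = k - 1}

/-- The Ramsey number `R(P_{n+2}, 𝒥ₙ)`: the least `N` such that every red-blue coloring
of the triples of `{1,…,N}` contains a red monotone path on `n+2` vertices or a blue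
copy of some member of `𝒥ₙ`. -/
noncomputable def RamseyPathJump (n : ℕ) : ℕ :=
  sInf {N | ∀ c : ℕ → ℕ → ℕ → Bool,
    HasRedPath N (n + 2) c ∨ ∃ H : JumpPath n, ∃ f, IsBlueCopy N H.m H.E c f}

/-- The Ramsey number `R(P_{n+2}, Iₙ)`. -/
noncomputable def RamseyPathI (n : ℕ) : ℕ :=
  sInf {N | ∀ c : ℕ → ℕ → ℕ → Bool,
    HasRedPath N (n + 2) c ∨ ∃ f, IsBlueCopy N (2 * n + 1) (edgeI n) c f}

/-- The Ramsey number `R(P_{n+2}, Pᵗₘ)` for a power path. -/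
noncomputable def RamseyPathPow (n t m : ℕ) : ℕ :=
  sInf {N | ∀ c : ℕ → ℕ → ℕ → Bool,
    HasRedPath N (n + 2) c ∨ ∃ f, IsBlueCopy N m (edgePow t m) c f}
/-! ### Auxiliary lemmas for the proof -/

private lemma redPath_restrict {N k k' : ℕ} {c : ℕ → ℕ → ℕ → Bool} {p : ℕ → ℕ}
    (h : IsRedPath N k c p) (hk : k' ≤ k) : IsRedPath N k' c p :=
  ⟨fun i h1 h2 => h.1 i h1 (le_trans h2 hk),
   fun i j h1 h2 h3 => h.2.1 i j h1 h2 (le_trans h3 hk),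
   fun i h1 h2 => h.2.2 i h1 (le_trans h2 hk)⟩

private lemma hasRedPath_mono {M N k : ℕ} {c : ℕ → ℕ → ℕ → Bool} (hMN : M ≤ N)
    (h : HasRedPath M k c) : HasRedPath N k c := by
  obtain ⟨p, h1, h2, h3⟩ := h
  exact ⟨p, fun i a b => ⟨(h1 i a b).1, le_trans (h1 i a b).2 hMN⟩, h2, h3⟩

private lemma isBlueCopy_mono {M N m : ℕ} {E : ℕ → ℕ → ℕ → Prop} {c : ℕ → ℕ → ℕ → Bool}
    {f : ℕ → ℕ} (hMN : M ≤ N) (h : IsBlueCopy M m E c f) : IsBlueCopy N m E c f := by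
  obtain ⟨h1, h2, h3⟩ := h
  exact ⟨fun i a b => ⟨(h1 i a b).1, le_trans (h1 i a b).2 hMN⟩, h2, h3⟩

/-- Greedy construction for the multicolour Ramsey theorem. -/
private lemma greedy_ramsey (n : ℕ) (hn : 1 ≤ n) (χ : ℕ → ℕ → Fin n) :
    ∀ (L : ℕ) (S : Finset ℕ), (n+1)^L ≤ S.card →
      ∃ (v : ℕ → ℕ) (col : ℕ → Fin n),
        (∀ i, i < L → v i ∈ S) ∧ (∀ i j, i < j → j < L → v i < v j) ∧
        (∀ i j, i < j → j < L → χ (v i) (v j) = col i) := by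
  intro L
  induction L with
  | zero =>
    intro S _
    exact ⟨fun _ => 0, fun _ => ⟨0, hn⟩,
      fun i hi => absurd hi (Nat.not_lt_zero i),
      fun i j _ hj => absurd hj (Nat.not_lt_zero j),
      fun i j _ hj => absurd hj (Nat.not_lt_zero j)⟩
  | succ L ih =>
    intro S hcard
    have hpos : 0 < S.card := lt_of_lt_of_le (pow_pos (by omega) (L+1)) hcard
    have hSne : S.Nonempty := Finset.card_pos.mp hpos
    set x := S.min' hSne with hx
    have hxS : x ∈ S := S.min'_mem hSne
    set T : Fin n → Finset ℕ := fun k => (S.erase x).filter (fun y => χ x y = k) with hT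
    have hsub : S.erase x ⊆ Finset.univ.biUnion T := by
      intro y hy
      exact Finset.mem_biUnion.mpr ⟨χ x y, Finset.mem_univ _,
        Finset.mem_filter.mpr ⟨hy, rfl⟩⟩
    have hkex : ∃ k : Fin n, (n+1)^L ≤ (T k).card := by
      by_contra hcon
      push_neg at hcon
      have h1 : (S.erase x).card ≤ ∑ k : Fin n, (T k).card :=
        le_trans (Finset.card_le_card hsub) Finset.card_biUnion_le
      have h2 : (∑ k : Fin n, (T k).card) + n ≤ n * (n+1)^L := by
        have hss : ∑ k : Fin n, ((T k).card + 1) ≤ ∑ _k : Fin n, (n+1)^L :=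
          Finset.sum_le_sum (fun k _ => by have := hcon k; omega)
        have hl : ∑ k : Fin n, ((T k).card + 1) = (∑ k : Fin n, (T k).card) + n := by
          rw [Finset.sum_add_distrib]
          simp
        have hr : ∑ _k : Fin n, ((n:ℕ)+1)^L = n * (n+1)^L := by
          simp [Finset.sum_const, mul_comm]
        omega
      have h3 : (S.erase x).card = S.card - 1 := Finset.card_erase_of_mem hxS
      have hp1 : 1 ≤ (n+1)^L := Nat.one_le_iff_ne_zero.mpr (pow_ne_zero _ (by omega))
      have hpow : (n+1)^(L+1) = n * (n+1)^L + (n+1)^L := by rw [pow_succ]; ring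
      omega
    obtain ⟨k, hk⟩ := hkex
    obtain ⟨v', col', hv'S, hv'mono, hv'col⟩ := ih (T k) hk
    have hTsub : ∀ {y}, y ∈ T k → y ∈ S.erase x := fun hy => Finset.filter_subset _ _ hy
    refine ⟨fun i => Nat.casesOn i x (fun i' => v' i'),
      fun i => Nat.casesOn i k (fun i' => col' i'), ?_, ?_, ?_⟩
    · intro i hi
      cases i with
      | zero => exact hxS
      | succ i' => exact Finset.erase_subset x S (hTsub (hv'S i' (by omega)))
    · intro i j hij hjL
      cases j with
      | zero => omega
      | succ j' =>
        have hvj : v' j' ∈ S.erase x := hTsub (hv'S j' (by omega))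
        cases i with
        | zero =>
          exact lt_of_le_of_ne (S.min'_le _ (Finset.erase_subset x S hvj))
            (Ne.symm (Finset.ne_of_mem_erase hvj))
        | succ i' => exact hv'mono i' j' (by omega) (by omega)
    · intro i j hij hjL
      cases j with
      | zero => omega
      | succ j' =>
        have hvj : v' j' ∈ T k := hv'S j' (by omega)
        cases i with
        | zero => exact (Finset.mem_filter.mp hvj).2
        | succ i' => exact hv'col i' j' (by omega) (by omega)

/-- Finite multicolour Ramsey theorem for cliques, in the encoding of this file. -/
private lemma cliqueRamsey (n m : ℕ) (hn : 1 ≤ n) :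
    ∃ N, ∀ χ : ℕ → ℕ → Fin n, HasMonoClique N m n χ := by
  obtain ⟨P, hP⟩ : ∃ P, P = n * m := ⟨_, rfl⟩
  refine ⟨(n+1)^(P+1), fun χ => ?_⟩
  have hcard : (n+1)^(P+1) ≤ (Finset.Icc 1 ((n+1)^(P+1))).card := by
    rw [Nat.card_Icc]; omega
  obtain ⟨v, col, hvS, hvmono, hvcol⟩ := greedy_ramsey n hn χ (P+1) _ hcard
  set L := P + 1 with hL
  have hkex : ∃ k : Fin n, m ≤ ((Finset.range L).filter (fun i => col i = k)).card := by
    by_contra hcon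
    push_neg at hcon
    have hsub : Finset.range L ⊆
        Finset.univ.biUnion (fun k : Fin n => (Finset.range L).filter (fun i => col i = k)) := by
      intro i hi
      exact Finset.mem_biUnion.mpr ⟨col i, Finset.mem_univ _, Finset.mem_filter.mpr ⟨hi, rfl⟩⟩
    have h1 : L ≤ ∑ k : Fin n, ((Finset.range L).filter (fun i => col i = k)).card := by
      have := le_trans (Finset.card_le_card hsub) Finset.card_biUnion_le
      simpa using this
    have h2 : (∑ k : Fin n, ((Finset.range L).filter (fun i => col i = k)).card) + n ≤ n * m := by
      have hss : ∑ k : Fin n, (((Finset.range L).filter (fun i => col i = k)).card + 1) ≤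
          ∑ _k : Fin n, m :=
        Finset.sum_le_sum (fun k _ => by have := hcon k; omega)
      have hl : ∑ k : Fin n, (((Finset.range L).filter (fun i => col i = k)).card + 1) =
          (∑ k : Fin n, ((Finset.range L).filter (fun i => col i = k)).card) + n := by
        rw [Finset.sum_add_distrib]; simp
      have hr : ∑ _k : Fin n, m = n * m := by simp [Finset.sum_const, mul_comm]
      omega
    omega
  obtain ⟨k, hk⟩ := hkex
  obtain ⟨F, hFsub, hFcard⟩ := Finset.exists_subset_card_eq hk
  have hFrange : ∀ {i}, i ∈ F → i < L := by
    intro i hi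
    exact Finset.mem_range.mp (Finset.filter_subset _ _ (hFsub hi))
  have hFcol : ∀ {i}, i ∈ F → col i = k := fun hi => (Finset.mem_filter.mp (hFsub hi)).2
  refine ⟨F.image v, ?_, ?_, k, ?_⟩
  · intro y hy
    obtain ⟨i, hiF, rfl⟩ := Finset.mem_image.mp hy
    exact hvS i (hFrange hiF)
  · rw [Finset.card_image_of_injOn, hFcard]
    intro i hi j hj hij
    by_contra hne
    rcases lt_or_gt_of_ne hne with h | h
    · exact absurd hij (ne_of_lt (hvmono i j h (hFrange hj)))
    · exact absurd hij.symm (ne_of_lt (hvmono j i h (hFrange hi)))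
  · intro a ha b hb hab
    obtain ⟨i, hiF, rfl⟩ := Finset.mem_image.mp ha
    obtain ⟨j, hjF, rfl⟩ := Finset.mem_image.mp hb
    have hij : i < j := by
      rcases lt_trichotomy i j with h | h | h
      · exact h
      · exact absurd (h ▸ hab) (lt_irrefl _)
      · exact absurd (hvmono j i h (hFrange hiF)) (not_lt_of_gt hab)
    rw [hvcol i j hij (hFrange hjF)]
    exact hFcol hiF

/-- With the coloring `red ↔ χ(u,v) > χ(v,w)` there is no red monotone path
on `n+2` vertices. -/
private lemma no_red_path (n N : ℕ) (χ : ℕ → ℕ → Fin n) :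
    ¬ HasRedPath N (n + 2) (fun u v w => decide (χ v w < χ u v)) := by
  rintro ⟨p, -, -, hred⟩
  have key : ∀ j, 1 ≤ j → j ≤ n + 1 → (χ (p j) (p (j+1))).val + j ≤ n := by
    intro j
    induction j with
    | zero => intro h; exact absurd h (by norm_num)
    | succ i ih =>
      intro _ hle
      by_cases hi0 : i = 0
      · subst hi0
        have := (χ (p (0+1)) (p (0+1+1))).isLt
        omega
      · have hred' := hred i (by omega) (by omega)
        simp only [decide_eq_true_eq] at hred'
        have hlt := Fin.lt_def.mp hred'
        have hih := ih (by omega) (by omega)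
        show (χ (p (i+1)) (p (i+2))).val + (i+1) ≤ n
        omega
  have hk := key (n+1) (by omega) (by omega)
  omega

/-- With the coloring `red ↔ χ(u,v) > χ(v,w)`, if `χ` has no monochromatic triangle
in `{1,…,N}` then there is no blue copy of `P⁴₃ₙ`. -/
private lemma no_blue_pow4 (n N : ℕ) (hn : 1 ≤ n) (χ : ℕ → ℕ → Fin n)
    (htf : ¬ HasMonoTriangle N n χ) (f : ℕ → ℕ) :
    ¬ IsBlueCopy N (3 * n) (edgePow 4 (3 * n)) (fun u v w => decide (χ v w < χ u v)) f := by
  rintro ⟨hbd, hmono, hblue⟩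
  have hb : ∀ a b d, 1 ≤ a → a < b → b < d → d ≤ 3*n → d - a ≤ 3 →
      χ (f a) (f b) ≤ χ (f b) (f d) := by
    intro a b d h1 h2 h3 h4 h5
    have := hblue a b d ⟨h1, h2, h3, h4, by omega⟩
    simp only [decide_eq_false_iff_not, not_lt] at this
    exact this
  have tf : ∀ x y z, 1 ≤ x → x < y → y < z → z ≤ 3*n →
      χ (f x) (f y) = χ (f y) (f z) → χ (f x) (f y) ≠ χ (f x) (f z) := by
    intro x y z h1 h2 h3 h4 he hne
    exact htf ⟨f x, f y, f z, (hbd x h1 (by omega)).1, hmono x y h1 h2 (by omega),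
      hmono y z (by omega) h3 h4, (hbd z (by omega) h4).2, he, hne⟩
  rcases Nat.lt_or_ge n 2 with h1n | h2n
  · have hn1 : n = 1 := by omega
    subst hn1
    exact (tf 1 2 3 (by norm_num) (by norm_num) (by norm_num) (by norm_num)
      (Subsingleton.elim _ _)) (Subsingleton.elim _ _)
  · have claim : ∀ k, 1 ≤ k → k ≤ n - 1 → k ≤ (χ (f (3*k)) (f (3*k+1))).val := by
      intro k
      induction k with
      | zero => intro h; exact absurd h (by norm_num)
      | succ i ih =>
        intro _ hkn
        by_cases hi0 : i = 0
        · subst hi0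
          by_contra hcon
          push_neg at hcon
          rw [show 3*(0+1) = 3 by norm_num, show 3*(0+1)+1 = 4 by norm_num] at hcon
          have h12 : χ (f 1) (f 2) ≤ χ (f 2) (f 3) :=
            hb 1 2 3 (by omega) (by omega) (by omega) (by omega) (by omega)
          have h23 : χ (f 2) (f 3) ≤ χ (f 3) (f 4) :=
            hb 2 3 4 (by omega) (by omega) (by omega) (by omega) (by omega)
          have h134 : χ (f 1) (f 3) ≤ χ (f 3) (f 4) :=
            hb 1 3 4 (by omega) (by omega) (by omega) (by omega) (by omega)
          have v1 := Fin.le_def.mp h12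
          have v2 := Fin.le_def.mp h23
          have v3 := Fin.le_def.mp h134
          exact (tf 1 2 3 (by omega) (by omega) (by omega) (by omega)
            (Fin.ext (by omega))) (Fin.ext (by omega))
        · have hi1 : 1 ≤ i := by omega
          by_contra hcon
          push_neg at hcon
          rw [show 3*(i+1)+1 = 3*i+4 by ring, show 3*(i+1) = 3*i+3 by ring] at hcon
          have ihv := ih hi1 (by omega)
          have hc1 : χ (f (3*i)) (f (3*i+1)) ≤ χ (f (3*i+1)) (f (3*i+2)) :=
            hb _ _ _ (by omega) (by omega) (by omega) (by omega) (by omega)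
          have hc2 : χ (f (3*i+1)) (f (3*i+2)) ≤ χ (f (3*i+2)) (f (3*i+3)) :=
            hb _ _ _ (by omega) (by omega) (by omega) (by omega) (by omega)
          have hc3 : χ (f (3*i+2)) (f (3*i+3)) ≤ χ (f (3*i+3)) (f (3*i+4)) :=
            hb _ _ _ (by omega) (by omega) (by omega) (by omega) (by omega)
          have he1 : χ (f (3*i)) (f (3*i+1)) ≤ χ (f (3*i+1)) (f (3*i+3)) :=
            hb (3*i) (3*i+1) (3*i+3) (by omega) (by omega) (by omega) (by omega) (by omega)
          have he2 : χ (f (3*i+1)) (f (3*i+3)) ≤ χ (f (3*i+3)) (f (3*i+4)) :=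
            hb (3*i+1) (3*i+3) (3*i+4) (by omega) (by omega) (by omega) (by omega) (by omega)
          have v0 := Fin.le_def.mp hc1
          have v1 := Fin.le_def.mp hc2
          have v2 := Fin.le_def.mp hc3
          have w1 := Fin.le_def.mp he1
          have w2 := Fin.le_def.mp he2
          exact (tf (3*i+1) (3*i+2) (3*i+3) (by omega) (by omega) (by omega) (by omega)
            (Fin.ext (by omega))) (Fin.ext (by omega))
    have hfin := claim (n-1) (by omega) (by omega)
    rw [show 3*(n-1)+1 = 3*n-2 by omega, show 3*(n-1) = 3*n-3 by omega] at hfin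
    have hc1 : χ (f (3*n-3)) (f (3*n-2)) ≤ χ (f (3*n-2)) (f (3*n-1)) :=
      hb _ _ _ (by omega) (by omega) (by omega) (by omega) (by omega)
    have hc2 : χ (f (3*n-2)) (f (3*n-1)) ≤ χ (f (3*n-1)) (f (3*n)) :=
      hb _ _ _ (by omega) (by omega) (by omega) (by omega) (by omega)
    have he : χ (f (3*n-3)) (f (3*n-2)) ≤ χ (f (3*n-2)) (f (3*n)) :=
      hb (3*n-3) (3*n-2) (3*n) (by omega) (by omega) (by omega) (by omega) (by omega)
    have v1 := Fin.le_def.mp hc1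
    have v2 := Fin.le_def.mp hc2
    have v3 := Fin.le_def.mp he
    have hlt1 : (χ (f (3*n-2)) (f (3*n-1))).val < n := (χ _ _).isLt
    have hlt2 : (χ (f (3*n-1)) (f (3*n))).val < n := (χ _ _).isLt
    have hlt3 : (χ (f (3*n-2)) (f (3*n))).val < n := (χ _ _).isLt
    exact (tf (3*n-2) (3*n-1) (3*n) (by omega) (by omega) (by omega) (by omega)
      (Fin.ext (by omega))) (Fin.ext (by omega))

/-- The Ramsey set defining `R(P_{n+2}, P⁴₃ₙ)` is nonempty. -/
private lemma pow4_set_nonempty (n : ℕ) (hn : 1 ≤ n) :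
    {N | ∀ c : ℕ → ℕ → ℕ → Bool,
      HasRedPath N (n + 2) c ∨ ∃ f, IsBlueCopy N (3*n) (edgePow 4 (3*n)) c f}.Nonempty := by
  obtain ⟨N, hcl⟩ := cliqueRamsey n (3*n) hn
  refine ⟨N, fun c => ?_⟩
  by_cases hr : HasRedPath N (n+2) c
  · exact Or.inl hr
  right
  set Aset : ℕ → ℕ → Set ℕ := fun u v =>
    {e | ∃ k p, IsRedPath N k c p ∧ 2 ≤ k ∧ p (k-1) = u ∧ p k = v ∧ e = k-1} with hAset
  have hαdef : ∀ u v, alphaFn N c u v = sSup (Aset u v) := fun _ _ => rfl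
  have hle : ∀ u v, ∀ e ∈ Aset u v, e ≤ n := by
    rintro u v e ⟨k, p, hp, hk2, -, -, rfl⟩
    by_contra hcon
    exact hr ⟨p, redPath_restrict hp (by omega)⟩
  have hBdd : ∀ u v, BddAbove (Aset u v) := fun u v => ⟨n, fun e he => hle u v e he⟩
  have hmem1 : ∀ u v, 1 ≤ u → u < v → v ≤ N → (1:ℕ) ∈ Aset u v := by
    intro u v h1 h2 h3
    refine ⟨2, fun i => if i ≤ 1 then u else v, ⟨?_, ?_, ?_⟩, le_refl 2, by norm_num,
      by norm_num, rfl⟩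
    · intro i hi1 hi2
      by_cases h : i ≤ 1
      · simp only [if_pos h]; omega
      · simp only [if_neg h]; omega
    · intro i j hi1 hij hj2
      simp only [if_pos (show i ≤ 1 by omega), if_neg (show ¬ j ≤ 1 by omega)]
      exact h2
    · intro i h1' h2'
      omega
  have hα_mem : ∀ u v, 1 ≤ u → u < v → v ≤ N →
      alphaFn N c u v ∈ Aset u v ∧ 1 ≤ alphaFn N c u v := by
    intro u v h1 h2 h3
    have hne : (Aset u v).Nonempty := ⟨1, hmem1 u v h1 h2 h3⟩
    constructor
    · rw [hαdef]
      exact Nat.sSup_mem hne (hBdd u v)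
    · rw [hαdef]
      exact le_csSup (hBdd u v) (hmem1 u v h1 h2 h3)
  have hαle : ∀ u v, alphaFn N c u v ≤ n := by
    intro u v
    rw [hαdef]
    rcases Set.eq_empty_or_nonempty (Aset u v) with h | h
    · rw [h, csSup_empty]
      exact bot_le
    · exact csSup_le h (hle u v)
  have hext : ∀ u v w, 1 ≤ u → u < v → v < w → w ≤ N → c u v w = true →
      alphaFn N c u v < alphaFn N c v w := by
    intro u v w h1 h2 h3 h4 hc
    obtain ⟨⟨k, p, hp, hk2, hpk1, hpk, heq⟩, hge1⟩ := hα_mem u v h1 h2 (by omega)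
    set q : ℕ → ℕ := fun i => if i ≤ k then p i else w with hq
    have hqk : IsRedPath N (k+1) c q := by
      refine ⟨?_, ?_, ?_⟩
      · intro i hi1 hik
        by_cases h : i ≤ k
        · simp only [hq, if_pos h]; exact hp.1 i hi1 h
        · simp only [hq, if_neg h]
          exact ⟨by omega, h4⟩
      · intro i j hi1 hij hjk
        by_cases hj : j ≤ k
        · simp only [hq, if_pos (show i ≤ k by omega), if_pos hj]
          exact hp.2.1 i j hi1 hij hj
        · simp only [hq, if_pos (show i ≤ k by omega), if_neg hj]
          have hik : i ≤ k := by omega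
          rcases Nat.eq_or_lt_of_le hik with h | h
          · rw [h, hpk]; exact h3
          · have hpi : p i < v := hpk ▸ hp.2.1 i k hi1 h (le_refl k)
            exact lt_trans hpi h3
      · intro i hi1 hik
        by_cases h : i + 2 ≤ k
        · simp only [hq, if_pos (show i ≤ k by omega), if_pos (show i+1 ≤ k by omega), if_pos h]
          exact hp.2.2 i hi1 h
        · have h1k : i + 1 = k := by omega
          have hik' : i = k - 1 := by omega
          simp only [hq, if_pos (show i ≤ k by omega), if_pos (show i+1 ≤ k by omega),
            if_neg (show ¬ i + 2 ≤ k by omega)]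
          rw [h1k, hpk, hik', hpk1]
          exact hc
    have hmemq : k ∈ Aset v w := by
      refine ⟨k+1, q, hqk, by omega, ?_, ?_, by omega⟩
      · show q (k+1-1) = v
        rw [show k+1-1 = k by omega]
        simp only [hq, if_pos (le_refl k)]
        exact hpk
      · simp only [hq, if_neg (show ¬ k + 1 ≤ k by omega)]
    have hkle : k ≤ alphaFn N c v w := by
      rw [hαdef]
      exact le_csSup (hBdd v w) hmemq
    omega
  have hval : ∀ u v, alphaFn N c u v - 1 < n := fun u v => by have := hαle u v; omega
  set χc : ℕ → ℕ → Fin n := fun u v => ⟨alphaFn N c u v - 1, hval u v⟩ with hχc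
  obtain ⟨S, hSsub, hScard, k, hk⟩ := hcl χc
  set g := S.orderIsoOfFin hScard with hg
  set f : ℕ → ℕ := fun i =>
    if h : 1 ≤ i ∧ i ≤ 3*n then (g ⟨i-1, by omega⟩ : ℕ) else 0 with hf
  have hfS : ∀ i, 1 ≤ i → i ≤ 3*n → f i ∈ S := by
    intro i h1 h2
    simp only [hf, dif_pos (show 1 ≤ i ∧ i ≤ 3*n from ⟨h1, h2⟩)]
    exact (g _).2
  have hfIcc : ∀ i, 1 ≤ i → i ≤ 3*n → 1 ≤ f i ∧ f i ≤ N := by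
    intro i h1 h2
    exact Finset.mem_Icc.mp (hSsub (hfS i h1 h2))
  have hfmono : ∀ i j, 1 ≤ i → i < j → j ≤ 3*n → f i < f j := by
    intro i j h1 hij hj
    simp only [hf, dif_pos (show 1 ≤ i ∧ i ≤ 3*n from ⟨h1, by omega⟩),
      dif_pos (show 1 ≤ j ∧ j ≤ 3*n from ⟨by omega, hj⟩)]
    have hlt : (⟨i-1, by omega⟩ : Fin (3*n)) < ⟨j-1, by omega⟩ := by
      simp only [Fin.mk_lt_mk]
      omega
    exact Subtype.coe_lt_coe.mpr (g.lt_iff_lt.mpr hlt)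
  refine ⟨f, hfIcc, hfmono, ?_⟩
  rintro a b d ⟨ha1, hab, hbd, hd, hspan⟩
  have hua := hfS a ha1 (by omega)
  have hub := hfS b (by omega) (by omega)
  have hud := hfS d (by omega) hd
  have hab' : f a < f b := hfmono a b ha1 hab (by omega)
  have hbd' : f b < f d := hfmono b d (by omega) hbd hd
  have h1 : χc (f a) (f b) = k := hk _ hua _ hub hab'
  have h2 : χc (f b) (f d) = k := hk _ hub _ hud hbd'
  have hvals : alphaFn N c (f a) (f b) - 1 = alphaFn N c (f b) (f d) - 1 := by
    have := congrArg Fin.val (h1.trans h2.symm)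
    simpa [hχc] using this
  have hge1ab : 1 ≤ alphaFn N c (f a) (f b) :=
    (hα_mem _ _ (hfIcc a ha1 (by omega)).1 hab' (hfIcc b (by omega) (by omega)).2).2
  have hge1bd : 1 ≤ alphaFn N c (f b) (f d) :=
    (hα_mem _ _ (hfIcc b (by omega) (by omega)).1 hbd' (hfIcc d (by omega) hd).2).2
  cases hcb : c (f a) (f b) (f d)
  · rfl
  · exfalso
    have := hext (f a) (f b) (f d) (hfIcc a ha1 (by omega)).1 hab' hbd'
      (hfIcc d (by omega) hd).2 hcb
    omega

/-- For every positive integer `n`, there is a red-blue coloring of the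
triples of `{1,…,r(3;n)-1}` with no red monotone path on `n+2` vertices and no blue copy
of the fourth power path `P⁴₃ₙ`; consequently `r(3;n) ≤ R(P_{n+2}, P⁴₃ₙ)`. -/
theorem lowerBound_pow4 (n : ℕ) (hn : 1 ≤ n) :
    (∃ c : ℕ → ℕ → ℕ → Bool,
      ¬ HasRedPath (r3 n - 1) (n + 2) c ∧
      ∀ f : ℕ → ℕ, ¬ IsBlueCopy (r3 n - 1) (3 * n) (edgePow 4 (3 * n)) c f) ∧
    r3 n ≤ RamseyPathPow n 4 (3 * n) := by
  by_cases hne : {N | ∀ χ : ℕ → ℕ → Fin n, HasMonoTriangle N n χ}.Nonempty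
  · have h0 : (0:ℕ) ∉ {N | ∀ χ : ℕ → ℕ → Fin n, HasMonoTriangle N n χ} := by
      intro h
      obtain ⟨u, v, w, h1, h2, h3, h4, -, -⟩ := h (fun _ _ => ⟨0, hn⟩)
      omega
    have hr3mem : r3 n ∈ {N | ∀ χ : ℕ → ℕ → Fin n, HasMonoTriangle N n χ} := Nat.sInf_mem hne
    have hr3pos : 1 ≤ r3 n := by
      rcases Nat.eq_zero_or_pos (r3 n) with h | h
      · rw [h] at hr3mem
        exact absurd hr3mem h0
      · exact h
    have hnm : r3 n - 1 ∉ {N | ∀ χ : ℕ → ℕ → Fin n, HasMonoTriangle N n χ} := by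
      apply Nat.notMem_of_lt_sInf
      show r3 n - 1 < r3 n
      omega
    have hχ : ∃ χ : ℕ → ℕ → Fin n, ¬ HasMonoTriangle (r3 n - 1) n χ := by
      by_contra h
      push_neg at h
      exact hnm (fun χ => h χ)
    obtain ⟨χ₀, htf⟩ := hχ
    constructor
    · exact ⟨fun u v w => decide (χ₀ v w < χ₀ u v), no_red_path n _ χ₀,
        fun f => no_blue_pow4 n _ hn χ₀ htf f⟩
    · have hS' := pow4_set_nonempty n hn
      have hMmem : RamseyPathPow n 4 (3*n) ∈ {N | ∀ c : ℕ → ℕ → ℕ → Bool,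
          HasRedPath N (n + 2) c ∨ ∃ f, IsBlueCopy N (3*n) (edgePow 4 (3*n)) c f} :=
        Nat.sInf_mem hS'
      by_contra hlt
      push_neg at hlt
      rcases hMmem (fun u v w => decide (χ₀ v w < χ₀ u v)) with hred | ⟨f, hblue⟩
      · exact no_red_path n _ χ₀ (hasRedPath_mono (show RamseyPathPow n 4 (3*n) ≤ r3 n - 1 by omega) hred)
      · exact no_blue_pow4 n _ hn χ₀ htf f (isBlueCopy_mono (show RamseyPathPow n 4 (3*n) ≤ r3 n - 1 by omega) hblue)
  · have hr3 : r3 n = 0 := by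
      have hemp : {N | ∀ χ : ℕ → ℕ → Fin n, HasMonoTriangle N n χ} = ∅ :=
        Set.not_nonempty_iff_eq_empty.mp hne
      show sInf {N | ∀ χ : ℕ → ℕ → Fin n, HasMonoTriangle N n χ} = 0
      rw [hemp]
      exact Nat.sInf_empty
    refine ⟨⟨fun _ _ _ => false, ?_, ?_⟩, by rw [hr3]; exact Nat.zero_le _⟩
    · rintro ⟨p, hbd, -, -⟩
      have h1 := hbd 1 (by omega) (by omega)
      rw [hr3] at h1
      omega
    · rintro f ⟨hbd, -, -⟩
      have h1 := hbd 1 (by omega) (by omega)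
      rw [hr3] at h1
      omega
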